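/- The function f(z) = z/(√(z+1)·√(z-1)) is complex-differentiable on ℂ \ [-1,1] with derivative f'(z) = -(z+1)^{-3/2}·(z-1)^{-3/2} (principal branches), and this derivative is nowhere zero on ℂ \ [-1,1]. -/

import Mathlib

/-!
Write `g z = csqrt (z + 1) * csqrt (z - 1)`, so that `f z = z / g z` and `g z ^ 2 = z ^ 2 - 1`.
A continuous nonvanishing square root of a differentiable function is differentiable, because
`(g w - g z) * (g w + g z) = g w ^ 2 - g z ^ 2`; hence `g' = z / g` and
`f' = (g ^ 2 - z ^ 2) / g ^ 3 = -(g ^ 3)⁻¹`. This is the claimed derivative, since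
`w ^ (-3/2) = (csqrt w ^ 3)⁻¹` holds for the principal branch at every `w`.
Off `(-∞, 1]` both factors of `g` are continuous. Across the cut `(-∞, -1)` each factor
changes sign, so their product `g` is still continuous there.
-/

noncomputable def csqrt (w : ℂ) : ℂ := w ^ ((1 : ℂ) / 2)

noncomputable def f (z : ℂ) : ℂ := z / (csqrt (z + 1) * csqrt (z - 1))

open Complex Filter Topology Set
open scoped Real

theorem ContinuousAt.hasDerivAt_of_sq_eq {𝕜 : Type*} [NontriviallyNormedField 𝕜] [CharZero 𝕜]
    {g h : 𝕜 → 𝕜} {z h' : 𝕜} (hg : ContinuousAt g z) (hgz : g z ≠ 0)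
    (hsq : ∀ᶠ w in 𝓝 z, g w ^ 2 = h w) (hh : HasDerivAt h h' z) :
    HasDerivAt g (h' / (2 * g z)) z := by
  have hsum : Tendsto (fun w => g w + g z) (𝓝[≠] z) (𝓝 (2 * g z)) := by
    rw [two_mul]
    exact (hg.tendsto.add tendsto_const_nhds).mono_left nhdsWithin_le_nhds
  have hsum_ne : ∀ᶠ w in 𝓝[≠] z, g w + g z ≠ 0 :=
    hsum.eventually_ne (mul_ne_zero two_ne_zero hgz)
  rw [hasDerivAt_iff_tendsto_slope] at hh ⊢
  refine (hh.div hsum (mul_ne_zero two_ne_zero hgz)).congr' ?_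
  filter_upwards [hsum_ne, nhdsWithin_le_nhds hsq, self_mem_nhdsWithin] with w hw hsqw hwz
  rw [Pi.div_apply, slope_def_field, slope_def_field, ← hsqw, ← hsq.self_of_nhds]
  field_simp [sub_ne_zero.2 hwz]
  ring

theorem csqrt_sq (w : ℂ) : csqrt w ^ 2 = w := by
  rw [csqrt, ← cpow_nat_mul]; norm_num

theorem cpow_neg_three_div_two (w : ℂ) : w ^ (-(3 : ℂ) / 2) = (csqrt w ^ 3)⁻¹ := by
  rw [csqrt, ← cpow_nat_mul, ← cpow_neg]; norm_num

theorem continuousAt_csqrt {w : ℂ} (hw : w ∈ slitPlane) : ContinuousAt csqrt w :=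
  continuousAt_cpow_const hw

theorem csqrt_eventuallyEq_exp {w : ℂ} (hw : w ≠ 0) :
    csqrt =ᶠ[𝓝 w] fun z => exp (log z / 2) := by
  filter_upwards [isOpen_ne.mem_nhds hw] with z hz
  rw [csqrt, cpow_def_of_ne_zero hz]; ring_nf

theorem continuousWithinAt_csqrt_of_re_neg_of_im_zero {w : ℂ} (hre : w.re < 0) (him : w.im = 0) :
    ContinuousWithinAt csqrt {z | 0 ≤ z.im} w := by
  have hw : w ≠ 0 := fun h => by simp [h] at hre
  have hexp : ContinuousWithinAt (fun z => exp (log z / 2)) {z | 0 ≤ z.im} w :=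
    continuous_exp.continuousAt.comp_continuousWithinAt
      ((continuousWithinAt_log_of_re_neg_of_im_zero hre him).div_const 2)
  exact hexp.congr_of_eventuallyEq ((csqrt_eventuallyEq_exp hw).filter_mono nhdsWithin_le_nhds)
    (csqrt_eventuallyEq_exp hw).self_of_nhds

theorem tendsto_csqrt_nhdsWithin_im_neg_of_re_neg_of_im_zero {w : ℂ} (hre : w.re < 0)
    (him : w.im = 0) : Tendsto csqrt (𝓝[{z | z.im < 0}] w) (𝓝 (-csqrt w)) := by
  have hw : w ≠ 0 := fun h => by simp [h] at hre
  have hlim := (continuous_exp.tendsto _).comp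
    ((tendsto_log_nhdsWithin_im_neg_of_re_neg_of_im_zero hre him).div_const 2)
  have hlog : log w = Real.log ‖w‖ + π * I := by
    rw [log, arg_eq_pi_iff.2 ⟨hre, him⟩]
  have hcsqrt := csqrt_eventuallyEq_exp hw
  refine (hlim.congr' (hcsqrt.filter_mono nhdsWithin_le_nhds).symm).trans_eq ?_
  rw [hcsqrt.self_of_nhds]
  dsimp only
  rw [hlog, show (Real.log ‖w‖ - π * I) / 2 = (Real.log ‖w‖ + π * I) / 2 + -(π * I) by ring,
    exp_add, exp_neg, exp_pi_mul_I, inv_neg_one, mul_neg_one]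

noncomputable def sqrtSqSubOne (z : ℂ) : ℂ := csqrt (z + 1) * csqrt (z - 1)

theorem sqrtSqSubOne_sq (z : ℂ) : sqrtSqSubOne z ^ 2 = z ^ 2 - 1 := by
  rw [sqrtSqSubOne, mul_pow, csqrt_sq, csqrt_sq]; ring

theorem continuousAt_sqrtSqSubOne_of_re_lt_neg_one {z : ℂ} (hre : z.re < -1) (him : z.im = 0) :
    ContinuousAt sqrtSqSubOne z := by
  have hre_add : (z + 1).re < 0 := by simp; linarith
  have hre_sub : (z - 1).re < 0 := by simp; linarith
  have him_add : (z + 1).im = 0 := by simpa using him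
  have him_sub : (z - 1).im = 0 := by simpa using him
  have hupper : ContinuousWithinAt sqrtSqSubOne {w | 0 ≤ w.im} z := by
    have hadd : ContinuousWithinAt (fun w => csqrt (w + 1)) {w | 0 ≤ w.im} z :=
      (continuousWithinAt_csqrt_of_re_neg_of_im_zero hre_add him_add).comp (f := (· + 1))
        (continuous_add_const 1).continuousWithinAt fun w hw => by simpa using hw
    have hsub : ContinuousWithinAt (fun w => csqrt (w - 1)) {w | 0 ≤ w.im} z :=
      (continuousWithinAt_csqrt_of_re_neg_of_im_zero hre_sub him_sub).comp (f := (· - 1))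
        (continuous_sub_right 1).continuousWithinAt fun w hw => by simpa using hw
    exact hadd.mul hsub
  have hlower : ContinuousWithinAt sqrtSqSubOne {w | w.im < 0} z := by
    have hadd : Tendsto (fun w => csqrt (w + 1)) (𝓝[{w | w.im < 0}] z) (𝓝 (-csqrt (z + 1))) :=
      (tendsto_csqrt_nhdsWithin_im_neg_of_re_neg_of_im_zero hre_add him_add).comp
        ((continuous_add_const 1).continuousWithinAt.tendsto_nhdsWithin
          fun w hw => by simpa using hw)
    have hsub : Tendsto (fun w => csqrt (w - 1)) (𝓝[{w | w.im < 0}] z) (𝓝 (-csqrt (z - 1))) :=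
      (tendsto_csqrt_nhdsWithin_im_neg_of_re_neg_of_im_zero hre_sub him_sub).comp
        ((continuous_sub_right 1).continuousWithinAt.tendsto_nhdsWithin
          fun w hw => by simpa using hw)
    have h := hadd.mul hsub
    rwa [neg_mul_neg] at h
  have hcover : {w : ℂ | 0 ≤ w.im} ∪ {w | w.im < 0} = univ := by
    ext w; simp [le_or_gt]
  rw [← continuousWithinAt_univ, ← hcover]
  exact hupper.union hlower

theorem continuousAt_sqrtSqSubOne {z : ℂ} (hz : ¬ (z.im = 0 ∧ z.re ∈ Icc (-1 : ℝ) 1)) :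
    ContinuousAt sqrtSqSubOne z := by
  by_cases hcut : z.im = 0 ∧ z.re < -1
  · exact continuousAt_sqrtSqSubOne_of_re_lt_neg_one hcut.2 hcut.1
  have hslit : z + 1 ∈ slitPlane ∧ z - 1 ∈ slitPlane := by
    simp only [mem_slitPlane_iff, add_re, sub_re, one_re, add_im, sub_im, one_im, add_zero,
      sub_zero]
    by_cases him : z.im = 0
    · have : 1 < z.re := by
        simp only [mem_Icc, him, true_and, not_and_or, not_le] at hz hcut
        grind
      exact ⟨.inl (by linarith), .inl (by linarith)⟩
    · exact ⟨.inr him, .inr him⟩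
  exact
    ((continuousAt_csqrt hslit.1).comp (f := (· + 1)) (continuous_add_const 1).continuousAt).mul
      ((continuousAt_csqrt hslit.2).comp (f := (· - 1)) (continuous_sub_right 1).continuousAt)

theorem sqrtSqSubOne_ne_zero {z : ℂ} (hz : z ^ 2 ≠ 1) : sqrtSqSubOne z ≠ 0 := by
  intro h
  apply hz
  rw [← sub_eq_zero, ← sqrtSqSubOne_sq, h, zero_pow two_ne_zero]

theorem sq_ne_one_of_notMem_Icc {z : ℂ} (hz : ¬ (z.im = 0 ∧ z.re ∈ Icc (-1 : ℝ) 1)) :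
    z ^ 2 ≠ 1 := by
  rw [Ne, sq_eq_one_iff]
  rintro (rfl | rfl) <;> norm_num at hz

theorem hasDerivAt_sqrtSqSubOne {z : ℂ} (hz : ¬ (z.im = 0 ∧ z.re ∈ Icc (-1 : ℝ) 1)) :
    HasDerivAt sqrtSqSubOne (z / sqrtSqSubOne z) z := by
  have hg0 := sqrtSqSubOne_ne_zero (sq_ne_one_of_notMem_Icc hz)
  have h := (continuousAt_sqrtSqSubOne hz).hasDerivAt_of_sq_eq hg0
    (.of_forall sqrtSqSubOne_sq) ((hasDerivAt_pow 2 z).sub_const 1)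
  refine h.congr_deriv ?_
  field_simp
  ring

theorem hasDerivAt_f (z : ℂ)
    (hz : ¬ (z.im = 0 ∧ z.re ∈ Set.Icc (-1 : ℝ) 1)) :
    HasDerivAt f (-((z + 1) ^ (-(3 : ℂ) / 2) * (z - 1) ^ (-(3 : ℂ) / 2))) z ∧
    -((z + 1) ^ (-(3 : ℂ) / 2) * (z - 1) ^ (-(3 : ℂ) / 2)) ≠ 0 := by
  have hg0 := sqrtSqSubOne_ne_zero (sq_ne_one_of_notMem_Icc hz)
  have hderiv : -((z + 1) ^ (-(3 : ℂ) / 2) * (z - 1) ^ (-(3 : ℂ) / 2)) =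
      -(sqrtSqSubOne z ^ 3)⁻¹ := by
    rw [cpow_neg_three_div_two, cpow_neg_three_div_two, sqrtSqSubOne, mul_pow, mul_inv]
  rw [hderiv]
  refine ⟨?_, by simpa using hg0⟩
  refine ((hasDerivAt_id' z).div (hasDerivAt_sqrtSqSubOne hz) hg0).congr_deriv ?_
  field_simp
  rw [sqrtSqSubOne_sq]
  ring
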